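/- arXiv:2410.10475 — 3 statements merged into one kernel-verified Lean document; each statement's English description precedes it below -/
import Mathlib

section
/- No finite tournament contains exactly two kings. -/
/-! A vertex of maximum out-degree is a king, since a vertex it does not reach would beat
everything it beats, and beat it as well. Applied to the subtournament of the vertices beating a
given vertex `v`, this yields a king of the whole tournament that beats `v`. If `a`, `b` were the
only kings with `b` beating `a`, then `a` reaches `b` through a vertex beating `b`, so some king
beats `b`; it can be neither `b` nor `a`. -/

def IsTournament {V : Type*} (r : V → V → Prop) : Prop :=
  (∀ v, ¬ r v v) ∧ ∀ u v : V, u ≠ v → (r u v ↔ ¬ r v u)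

def IsKing {V : Type*} (r : V → V → Prop) (v : V) : Prop :=
  ∀ u : V, u ≠ v → r v u ∨ ∃ w, r v w ∧ r w u

namespace IsTournament

variable {V : Type*} {r : V → V → Prop}

theorem comap {W : Type*} (hT : IsTournament r) {f : W → V} (hf : Function.Injective f) :
    IsTournament (fun x y => r (f x) (f y)) :=
  ⟨fun x => hT.1 (f x), fun x y hxy => hT.2 (f x) (f y) (hf.ne hxy)⟩

theorem isKing_of_forall_ncard_le [Finite V] (hT : IsTournament r) {v : V}
    (hmax : ∀ u, {w | r u w}.ncard ≤ {w | r v w}.ncard) : IsKing r v := by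
  intro u hu
  by_contra! hfar
  obtain ⟨hvu, hnopath⟩ := hfar
  have huv : r u v := (hT.2 u v hu).mpr hvu
  have hsub : {w | r v w} ⊂ {w | r u w} := by
    refine Set.ssubset_iff_of_subset (fun w hw => ?_) |>.mpr ⟨v, huv, hT.1 v⟩
    have hwu : u ≠ w := by rintro rfl; exact hvu hw
    exact (hT.2 u w hwu).mpr (hnopath w hw)
  exact (Set.ncard_lt_ncard hsub).not_ge (hmax u)

theorem exists_isKing [Finite V] [Nonempty V] (hT : IsTournament r) : ∃ v, IsKing r v := by
  obtain ⟨v, hv⟩ := Finite.exists_max fun v => {w | r v w}.ncard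
  exact ⟨v, hT.isKing_of_forall_ncard_le hv⟩

theorem isKing_of_isKing_subtype (hT : IsTournament r) {v : V} {c : {x // r x v}}
    (hc : IsKing (fun x y : {x // r x v} => r x y) c) : IsKing r c := by
  intro u hu
  by_cases huv : r u v
  · have hne : (⟨u, huv⟩ : {x // r x v}) ≠ c := fun h => hu (congrArg Subtype.val h)
    obtain h | ⟨w, hcw, hwu⟩ := hc ⟨u, huv⟩ hne
    · exact .inl h
    · exact .inr ⟨w, hcw, hwu⟩
  · obtain rfl | hvu := eq_or_ne v u
    · exact .inl c.2
    · exact .inr ⟨v, c.2, (hT.2 v u hvu).mpr huv⟩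

theorem exists_isKing_rel_of_exists_rel [Finite V] (hT : IsTournament r) {v : V}
    (hv : ∃ x, r x v) : ∃ c, IsKing r c ∧ r c v := by
  have : Nonempty {x // r x v} := nonempty_subtype.mpr hv
  obtain ⟨c, hc⟩ := (hT.comap (Subtype.val_injective (p := (r · v)))).exists_isKing
  exact ⟨c, hT.isKing_of_isKing_subtype hc, c.2⟩

end IsTournament

theorem not_exactly_two_kings {V : Type*} [Fintype V]
    (r : V → V → Prop) (hT : IsTournament r) :
    {v : V | IsKing r v}.ncard ≠ 2 := by
  intro h
  obtain ⟨a, b, hab, hkings⟩ := Set.ncard_eq_two.mp h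
  wlog hba : r b a generalizing a b
  · exact this b a hab.symm (by rw [hkings, Set.pair_comm]) ((hT.2 a b hab).mpr hba)
  have isKing_iff (c : V) : IsKing r c ↔ c = a ∨ c = b := Set.ext_iff.mp hkings c
  have hab' : ¬ r a b := (hT.2 b a hab.symm).mp hba
  obtain ⟨w, -, hwb⟩ := ((isKing_iff a).mpr (.inl rfl) b hab.symm).resolve_left hab'
  obtain ⟨c, hc, hcb⟩ := hT.exists_isKing_rel_of_exists_rel ⟨w, hwb⟩
  obtain rfl | rfl := (isKing_iff c).mp hc
  · exact hab' hcb
  · exact hT.1 c hcb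
end

section
/- Let T be a finite tournament, let k1 be a king of T whose in-neighborhood N^c(k1) is nonempty, let k2 be a king of the subtournament induced on N^c(k1), and suppose the in-neighborhood N^c(k2) is nonempty. Then any king k3 of the subtournament induced on N^c(k2) is a king of T, and k1, k2, k3 are pairwise distinct. -/
/-- A king of the subtournament induced on `S`. -/
def IsKingOn {V : Type*} (r : V → V → Prop) (S : Set V) (v : V) : Prop :=
  v ∈ S ∧ ∀ u ∈ S, u ≠ v → r v u ∨ ∃ w ∈ S, r v w ∧ r w u

namespace IsTournament

variable {V : Type*} {r : V → V → Prop}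

theorem ne_of_rel (hT : IsTournament r) {u v : V} (h : r u v) : u ≠ v := by
  rintro rfl
  exact hT.1 u h

theorem asymm (hT : IsTournament r) {u v : V} (h : r u v) : ¬ r v u :=
  (hT.2 u v (hT.ne_of_rel h)).1 h

theorem rel_of_not_rel (hT : IsTournament r) {u v : V} (hne : u ≠ v) (h : ¬ r u v) : r v u :=
  (hT.2 v u hne.symm).2 h

theorem isKing_of_isKingOn_inNeighbors (hT : IsTournament r) {v k : V}
    (hk : IsKingOn r {w | r w v} k) : IsKing r k := by
  intro u huk
  by_cases huv : u = v
  · exact .inl (huv ▸ hk.1)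
  by_cases hin : r u v
  · obtain hdirect | ⟨w, -, hkw, hwu⟩ := hk.2 u hin huk
    · exact .inl hdirect
    · exact .inr ⟨w, hkw, hwu⟩
  · exact .inr ⟨v, hk.1, hT.rel_of_not_rel huv hin⟩

end IsTournament

theorem three_kings_construction_general {V : Type*}
    (r : V → V → Prop) (hT : IsTournament r) (k1 k2 k3 : V)
    (h2 : IsKingOn r {w : V | r w k1} k2)
    (h3 : IsKingOn r {w : V | r w k2} k3) :
    IsKing r k3 ∧ k1 ≠ k2 ∧ k1 ≠ k3 ∧ k2 ≠ k3 := by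
  have h21 : r k2 k1 := h2.1
  have h32 : r k3 k2 := h3.1
  refine ⟨hT.isKing_of_isKingOn_inNeighbors h3, (hT.ne_of_rel h21).symm, ?_,
    (hT.ne_of_rel h32).symm⟩
  rintro rfl
  exact hT.asymm h21 h32

theorem three_kings_construction {V : Type*} [Fintype V]
    (r : V → V → Prop) (hT : IsTournament r) (k1 k2 k3 : V)
    (h1 : IsKing r k1)
    (hne1 : {w : V | r w k1}.Nonempty)
    (h2 : IsKingOn r {w : V | r w k1} k2)
    (hne2 : {w : V | r w k2}.Nonempty)
    (h3 : IsKingOn r {w : V | r w k2} k3) :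
    IsKing r k3 ∧ k1 ≠ k2 ∧ k1 ≠ k3 ∧ k2 ≠ k3 :=
  three_kings_construction_general r hT k1 k2 k3 h2 h3
end

section
/- For every m ≥ 1 such that there exists a tournament on m vertices in which every vertex is a king, there exists a tournament T on 3m+3 vertices, with three distinguished vertices k1, k2, k3 and a partition of the remaining 3m vertices into sets A, B, C each of size m, such that: (i) the kings of T are exactly k1, k2, k3; (ii) for every a ∈ A and c ∈ C, reversing the edge between a and c makes a a king of the resulting tournament; and (iii) after reversing any set of edges between vertices of a subset A' ⊆ A and vertices of C, every vertex of A \ A' still cannot reach k3 by a directed path of length at most 2, every vertex of B cannot reach k1 by a directed path of length at most 2, and every vertex of C cannot reach k2 by a directed path of length at most 2. -/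
/-- Reverse the orientation of the single edge between `x` and `y`, leaving all
other edges unchanged. -/
def flipEdge {V : Type*} (r : V → V → Prop) (x y : V) : V → V → Prop :=
  fun a b =>
    ((a = x ∧ b = y) ∨ (a = y ∧ b = x) → ¬ r a b) ∧
    (¬ ((a = x ∧ b = y) ∨ (a = y ∧ b = x)) → r a b)

/-- `v` reaches `u` by a directed path of length at most 2. -/
def Reach2 {V : Type*} (r : V → V → Prop) (v u : V) : Prop :=
  r v u ∨ ∃ w, r v w ∧ r w u

open Function Finset

section General

variable {V W : Type*}

theorem IsTournament.onFun {R : W → W → Prop} (hR : IsTournament R) {f : V → W}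
    (hf : Injective f) : IsTournament (R on f) :=
  ⟨fun v => hR.1 (f v), fun u v huv => hR.2 (f u) (f v) (hf.ne huv)⟩

theorem reach2_onFun {R : W → W → Prop} (e : V ≃ W) {v u : V} :
    Reach2 (R on e) v u ↔ Reach2 R (e v) (e u) :=
  or_congr Iff.rfl (e.exists_congr fun _ => Iff.rfl)

theorem isKing_onFun {R : W → W → Prop} (e : V ≃ W) {v : V} :
    IsKing (R on e) v ↔ IsKing R (e v) :=
  e.forall_congr fun _ => imp_congr e.injective.ne_iff.symm (reach2_onFun e)

theorem flipEdge_onFun {R : W → W → Prop} {f : V → W} (hf : Injective f) (x y : V) :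
    flipEdge (R on f) x y = (flipEdge R (f x) (f y) on f) := by
  ext a b
  simp only [flipEdge, onFun, hf.eq_iff]

theorem Reach2.of_reorient_between {r r' : V → V → Prop} {S C : Finset V}
    (hCS : ∀ c ∈ C, ∀ a ∈ S, r c a)
    (hr' : ∀ x y, ¬ ((x ∈ S ∧ y ∈ C) ∨ (x ∈ C ∧ y ∈ S)) → (r' x y ↔ r x y))
    {v u : V} (hv : v ∉ S) (hu : u ∉ S) (huC : u ∉ C) (h : Reach2 r' v u) : Reach2 r v u := by
  have out : ∀ w, r' v w → r v w := fun w hvw => by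
    by_cases hvC : v ∈ C ∧ w ∈ S
    · exact hCS v hvC.1 w hvC.2
    · exact (hr' v w (by tauto)).1 hvw
  have into : ∀ w, r' w u → r w u := fun w hwu => (hr' w u (by tauto)).1 hwu
  rcases h with h | ⟨w, hvw, hwu⟩
  · exact Or.inl (out u h)
  · exact Or.inr ⟨w, out w hvw, into w hwu⟩

end General

section HardTournament

variable {m : ℕ}

/-- `Sum.inl i` is the king `k_(i+1)`, and `Sum.inr (j, v)` is the copy of `v` in the `j`-th
block (`A`, `B`, `C` for `j = 0, 1, 2`). -/
def hardTournament (q : Fin m → Fin m → Prop) :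
    Fin 3 ⊕ Fin 3 × Fin m → Fin 3 ⊕ Fin 3 × Fin m → Prop
  | .inl i, .inl i' => i' = i + 1
  | .inl i, .inr (j, _) => j ≠ i
  | .inr (j, _), .inl i => j = i
  | .inr (j, v), .inr (j', v') => if j = j' then q v v' else j' = j + 1

variable {q : Fin m → Fin m → Prop}

theorem isTournament_hardTournament (hq : IsTournament q) : IsTournament (hardTournament q) := by
  constructor
  · rintro (i | ⟨j, v⟩)
    · fin_cases i <;> simp [hardTournament]
    · simpa [hardTournament] using hq.1 v
  · rintro (i | ⟨j, v⟩) (i' | ⟨j', v'⟩) h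
    · fin_cases i <;> fin_cases i' <;> simp_all [hardTournament]
    · simp [hardTournament]
    · simp [hardTournament]
    · by_cases hj : j = j'
      · subst hj
        simpa [hardTournament] using hq.2 v v' (by simpa using h)
      · fin_cases j <;> fin_cases j' <;> simp_all [hardTournament]

theorem isKing_hardTournament_inl (i : Fin 3) : IsKing (hardTournament q) (.inl i) := by
  rintro (i' | ⟨j, v⟩) hu
  · fin_cases i <;> fin_cases i' <;> simp_all [hardTournament]
  · fin_cases i <;> fin_cases j <;> simp [hardTournament]

theorem not_reach2_hardTournament_inr (j : Fin 3) (v : Fin m) :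
    ¬ Reach2 (hardTournament q) (.inr (j, v)) (.inl (j + 2)) := by
  fin_cases j <;> simp [Reach2, hardTournament]

variable (m) in
def hardBlock (j : Fin 3) : Finset (Fin 3 ⊕ Fin 3 × Fin m) :=
  univ.map ((Embedding.sectR j (Fin m)).trans Embedding.inr)

@[simp]
theorem inl_notMem_hardBlock (i j : Fin 3) : Sum.inl i ∉ hardBlock m j := by
  simp [hardBlock]

@[simp]
theorem inr_mem_hardBlock (j j' : Fin 3) (v : Fin m) :
    Sum.inr (j', v) ∈ hardBlock m j ↔ j' = j := by
  simp [hardBlock, eq_comm]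

theorem card_hardBlock (j : Fin 3) : (hardBlock m j).card = m := by
  simp [hardBlock]

theorem disjoint_hardBlock {j j' : Fin 3} (h : j ≠ j') :
    Disjoint (hardBlock m j) (hardBlock m j') := by
  rw [disjoint_left]
  rintro (i | ⟨k, v⟩) <;> simp_all

theorem mem_hardBlock_union {w : Fin 3 ⊕ Fin 3 × Fin m} :
    w ∈ hardBlock m 0 ∪ hardBlock m 1 ∪ hardBlock m 2 ↔
      w ≠ .inl 0 ∧ w ≠ .inl 1 ∧ w ≠ .inl 2 := by
  rcases w with i | ⟨j, v⟩
  · fin_cases i <;> simp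
  · fin_cases j <;> simp

theorem isKing_hardTournament_iff {w : Fin 3 ⊕ Fin 3 × Fin m} :
    IsKing (hardTournament q) w ↔ w = .inl 0 ∨ w = .inl 1 ∨ w = .inl 2 := by
  rcases w with i | ⟨j, v⟩
  · exact iff_of_true (isKing_hardTournament_inl i) (by fin_cases i <;> simp)
  · exact iff_of_false (fun h => not_reach2_hardTournament_inr j v (h _ (by simp))) (by simp)

theorem not_reach2_of_mem_hardBlock {j : Fin 3} {w : Fin 3 ⊕ Fin 3 × Fin m}
    (hw : w ∈ hardBlock m j) : ¬ Reach2 (hardTournament q) w (.inl (j + 2)) := by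
  rcases w with i | ⟨j', v⟩
  · simp at hw
  · rw [inr_mem_hardBlock] at hw
    exact hw ▸ not_reach2_hardTournament_inr j' v

theorem hardTournament_of_mem_hardBlock_two_zero {c a : Fin 3 ⊕ Fin 3 × Fin m}
    (hc : c ∈ hardBlock m 2) (ha : a ∈ hardBlock m 0) : hardTournament q c a := by
  rcases c with i | ⟨j, v⟩ <;> rcases a with i' | ⟨j', v'⟩ <;> simp_all [hardTournament]

theorem isKing_flipEdge_hardTournament (hk : ∀ v, IsKing q v)
    {a c : Fin 3 ⊕ Fin 3 × Fin m} (ha : a ∈ hardBlock m 0) (hc : c ∈ hardBlock m 2) :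
    IsKing (flipEdge (hardTournament q) a c) a := by
  rcases a with i | ⟨j, v⟩ <;> rcases c with i' | ⟨j', w⟩ <;>
    simp only [inl_notMem_hardBlock, inr_mem_hardBlock] at ha hc
  subst ha hc
  rintro (i | ⟨j, u⟩) hu
  · fin_cases i
    · left; simp [flipEdge, hardTournament]
    · right; refine ⟨.inr (1, v), ?_, ?_⟩ <;> simp [flipEdge, hardTournament]
    · right; refine ⟨.inr (2, w), ?_, ?_⟩ <;> simp [flipEdge, hardTournament]
  · fin_cases j
    · have huv : u ≠ v := by rintro rfl; exact hu rfl
      rcases hk v u huv with h | ⟨z, hvz, hzu⟩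
      · left; simpa [flipEdge, hardTournament] using h
      · right; refine ⟨.inr (0, z), ?_, ?_⟩ <;> simpa [flipEdge, hardTournament]
    · left; simp [flipEdge, hardTournament]
    · right; refine ⟨.inr (1, v), ?_, ?_⟩ <;> simp [flipEdge, hardTournament]

theorem not_reach2_of_reorient_hardTournament {V : Type*} (e : V ≃ Fin 3 ⊕ Fin 3 × Fin m)
    {A' : Finset V} (hA' : A' ⊆ (hardBlock m 0).map e.symm.toEmbedding) {r' : V → V → Prop}
    (hr' : ∀ x y, ¬ ((x ∈ A' ∧ y ∈ (hardBlock m 2).map e.symm.toEmbedding) ∨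
      (x ∈ (hardBlock m 2).map e.symm.toEmbedding ∧ y ∈ A')) →
      (r' x y ↔ (hardTournament q on e) x y))
    {j : Fin 3} {x : V} (hx : e x ∈ hardBlock m j) (hxA' : x ∉ A') :
    ¬ Reach2 r' x (e.symm (.inl (j + 2))) := by
  have mem_block {j y} :
      y ∈ (hardBlock m j).map e.symm.toEmbedding ↔ e y ∈ hardBlock m j := by
    simp [mem_map_equiv]
  have king_notMem {i j} : e.symm (.inl i) ∉ (hardBlock m j).map e.symm.toEmbedding := by simp
  have hCA' : ∀ c ∈ (hardBlock m 2).map e.symm.toEmbedding, ∀ a ∈ A',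
      (hardTournament q on e) c a := fun c hc a ha =>
    hardTournament_of_mem_hardBlock_two_zero (mem_block.1 hc) (mem_block.1 (hA' ha))
  refine mt (Reach2.of_reorient_between hCA' hr' hxA' (fun h => king_notMem (hA' h))
    king_notMem) ?_
  rw [reach2_onFun, e.apply_symm_apply]
  exact not_reach2_of_mem_hardBlock hx

end HardTournament

theorem hard_instance_exists_general (m : ℕ)
    (hall : ∃ r : Fin m → Fin m → Prop, IsTournament r ∧ ∀ v : Fin m, IsKing r v) :
    ∃ (r : Fin (3 * m + 3) → Fin (3 * m + 3) → Prop) (k1 k2 k3 : Fin (3 * m + 3))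
      (A B C : Finset (Fin (3 * m + 3))),
      IsTournament r ∧
      k1 ≠ k2 ∧ k1 ≠ k3 ∧ k2 ≠ k3 ∧
      A.card = m ∧ B.card = m ∧ C.card = m ∧
      Disjoint A B ∧ Disjoint A C ∧ Disjoint B C ∧
      (∀ x : Fin (3 * m + 3), x ∈ A ∪ B ∪ C ↔ x ≠ k1 ∧ x ≠ k2 ∧ x ≠ k3) ∧
      -- (i) the kings of T are exactly k1, k2, k3
      ({v : Fin (3 * m + 3) | IsKing r v} = {k1, k2, k3}) ∧
      -- (ii) flipping any edge between a ∈ A and c ∈ C makes a a king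
      (∀ a ∈ A, ∀ c ∈ C, IsKing (flipEdge r a c) a) ∧
      -- (iii) after reversing any set of edges between A' ⊆ A and C
      (∀ A' ⊆ A, ∀ r' : Fin (3 * m + 3) → Fin (3 * m + 3) → Prop,
        IsTournament r' →
        (∀ x y : Fin (3 * m + 3),
          ¬ ((x ∈ A' ∧ y ∈ C) ∨ (x ∈ C ∧ y ∈ A')) → (r' x y ↔ r x y)) →
        (∀ a ∈ A, a ∉ A' → ¬ Reach2 r' a k3) ∧
        (∀ b ∈ B, ¬ Reach2 r' b k1) ∧
        (∀ c ∈ C, ¬ Reach2 r' c k2)) := by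
  obtain ⟨q, hq, hk⟩ := hall
  let e : Fin (3 * m + 3) ≃ Fin 3 ⊕ Fin 3 × Fin m := (Fintype.equivFinOfCardEq (by
    simp only [Fintype.card_sum, Fintype.card_prod, Fintype.card_fin]; ring)).symm
  let block (j : Fin 3) := (hardBlock m j).map e.symm.toEmbedding
  have mem_block {j x} : x ∈ block j ↔ e x ∈ hardBlock m j := by simp [block, mem_map_equiv]
  have card_block (j) : (block j).card = m := by simp [block, card_hardBlock]
  have disjoint_block {j j'} (h : j ≠ j') : Disjoint (block j) (block j') :=
    (disjoint_map _).2 (disjoint_hardBlock h)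
  refine ⟨hardTournament q on e, e.symm (.inl 0), e.symm (.inl 1), e.symm (.inl 2),
    block 0, block 1, block 2, (isTournament_hardTournament hq).onFun e.injective,
    by simp, by simp, by simp, card_block 0, card_block 1, card_block 2,
    disjoint_block (by decide), disjoint_block (by decide), disjoint_block (by decide),
    fun x => by simpa [mem_block, e.eq_symm_apply] using mem_hardBlock_union (w := e x),
    Set.ext fun x => by simp [isKing_onFun, isKing_hardTournament_iff, e.eq_symm_apply],
    fun a ha c hc => ?_, fun A' hA' r' _ hr' => ?_⟩
  · rw [flipEdge_onFun e.injective, isKing_onFun]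
    exact isKing_flipEdge_hardTournament hk (mem_block.1 ha) (mem_block.1 hc)
  · have notMem_A' {j x} (hj : j ≠ 0) (hx : x ∈ block j) : x ∉ A' := fun h =>
      disjoint_left.1 (disjoint_block hj.symm) (hA' h) hx
    exact ⟨fun a ha => not_reach2_of_reorient_hardTournament e hA' hr' (mem_block.1 ha),
      fun b hb => not_reach2_of_reorient_hardTournament e hA' hr' (mem_block.1 hb)
        (notMem_A' (by decide) hb),
      fun c hc => not_reach2_of_reorient_hardTournament e hA' hr' (mem_block.1 hc)
        (notMem_A' (by decide) hc)⟩

theorem hard_instance_exists (m : ℕ) (hm : 1 ≤ m)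
    (hall : ∃ r : Fin m → Fin m → Prop, IsTournament r ∧ ∀ v : Fin m, IsKing r v) :
    ∃ (r : Fin (3 * m + 3) → Fin (3 * m + 3) → Prop) (k1 k2 k3 : Fin (3 * m + 3))
      (A B C : Finset (Fin (3 * m + 3))),
      IsTournament r ∧
      k1 ≠ k2 ∧ k1 ≠ k3 ∧ k2 ≠ k3 ∧
      A.card = m ∧ B.card = m ∧ C.card = m ∧
      Disjoint A B ∧ Disjoint A C ∧ Disjoint B C ∧
      (∀ x : Fin (3 * m + 3), x ∈ A ∪ B ∪ C ↔ x ≠ k1 ∧ x ≠ k2 ∧ x ≠ k3) ∧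
      -- (i) the kings of T are exactly k1, k2, k3
      ({v : Fin (3 * m + 3) | IsKing r v} = {k1, k2, k3}) ∧
      -- (ii) flipping any edge between a ∈ A and c ∈ C makes a a king
      (∀ a ∈ A, ∀ c ∈ C, IsKing (flipEdge r a c) a) ∧
      -- (iii) after reversing any set of edges between A' ⊆ A and C
      (∀ A' ⊆ A, ∀ r' : Fin (3 * m + 3) → Fin (3 * m + 3) → Prop,
        IsTournament r' →
        (∀ x y : Fin (3 * m + 3),
          ¬ ((x ∈ A' ∧ y ∈ C) ∨ (x ∈ C ∧ y ∈ A')) → (r' x y ↔ r x y)) →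
        (∀ a ∈ A, a ∉ A' → ¬ Reach2 r' a k3) ∧
        (∀ b ∈ B, ¬ Reach2 r' b k1) ∧
        (∀ c ∈ C, ¬ Reach2 r' c k2)) :=
  hard_instance_exists_general m hall
end
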